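/- arXiv:1112.4668 — 4 statements merged into one kernel-verified Lean document; each statement's English description precedes it below -/
import Mathlib

section
/- Let R be a principal ideal domain, C_1 a free R-module with basis {e_1}, C_0 a free R-module with basis {f_1,...,f_k} (k ≥ 1), and ∂: C_1 → C_0 an R-linear map with ∂(e_1) = Σ_{i=1}^k a_i f_i where all a_i ≠ 0. If the quotient C_0 / im(∂) is isomorphic to R, then k = 2. -/
/-!
The image of `∂` is the span of the nonzero vector `a`, which is free of rank one because
`R^k` is torsion-free. If the cokernel is `≅ R`, it is projective, so
`0 → span {a} → R^k → R^k ⧸ span {a} → 0` splits and `R^k ≅ R × R`; comparing ranks gives `k = 2`.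
-/

namespace Submodule

variable {R M : Type*} [Ring R] [AddCommGroup M] [Module R M]

noncomputable def prodQuotientEquivOfProjective (N : Submodule R M)
    [Module.Projective R (M ⧸ N)] : M ≃ₗ[R] N × (M ⧸ N) :=
  (LinearMap.exact_subtype_mkQ N).splitSurjectiveEquiv N.injective_subtype
    ⟨_, (Module.projective_lifting_property N.mkQ LinearMap.id N.mkQ_surjective).choose_spec⟩ |>.1

theorem finrank_eq_two_of_quotient_span_singleton_equiv [IsDomain R] [StrongRankCondition R]
    [Module.IsTorsionFree R M] {v : M} (hv : v ≠ 0) (e : (M ⧸ span R {v}) ≃ₗ[R] R) :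
    Module.finrank R M = 2 := by
  have : Module.Projective R (M ⧸ span R {v}) := .of_equiv e.symm
  have eSpan : span R {v} ≃ₗ[R] R := (LinearEquiv.toSpanNonzeroSingleton R M v hv).symm
  rw [((span R {v}).prodQuotientEquivOfProjective.trans (eSpan.prodCongr e)).finrank_eq]
  simp

end Submodule

theorem acyclic_order_one_single_generator_forces_two_general
    {R : Type*} [CommRing R] [IsDomain R]
    (k : ℕ) (hk : 1 ≤ k) (a : Fin k → R) (ha : ∀ i, a i ≠ 0)
    (hH0 : Nonempty (((Fin k → R) ⧸ Submodule.span R {a}) ≃ₗ[R] R)) :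
    k = 2 := by
  have ha0 : a ≠ 0 := fun h ↦ ha ⟨0, hk⟩ (congrFun h _)
  obtain ⟨e⟩ := hH0
  simpa using Submodule.finrank_eq_two_of_quotient_span_singleton_equiv ha0 e

theorem acyclic_order_one_single_generator_forces_two
    {R : Type*} [CommRing R] [IsDomain R] [IsPrincipalIdealRing R]
    (k : ℕ) (hk : 1 ≤ k) (a : Fin k → R) (ha : ∀ i, a i ≠ 0)
    (hH0 : Nonempty (((Fin k → R) ⧸ Submodule.span R {a}) ≃ₗ[R] R)) :
    k = 2 :=
  acyclic_order_one_single_generator_forces_two_general k hk a ha hH0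
end

section
/- Let R be a PID and let ∂_d: C_d → C_{d-1} be an R-linear map between free R-modules, where C_d has basis {e_1,...,e_m, g_1,...,g_n}. Suppose (a) the restriction of ∂_d to the submodule Ĉ_d spanned by e_1,...,e_m is injective, and (b) each g_j is precritical, i.e. there is a nonzero a_j ∈ R with a_j ∂_d(g_j) ∈ ∂_d(Ĉ_d). Then ker ∂_d is a free R-module of rank n. -/
/-!
Projecting onto the `g`-coordinates is injective on `ker ∂`, because a cycle with vanishing
`g`-coordinates lies in `Ĉ` where `∂` is injective. So `ker ∂` is isomorphic to a submodule of
`Rⁿ`, hence free of rank at most `n` over the PID `R`. Precriticality of `g_j` produces a cycle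
`a_j g_j - c_j` with `c_j ∈ Ĉ`, whose projection is `a_j eⱼ`; these `n` elements are linearly
independent, so the rank is exactly `n`.
-/

open Module

theorem span_range_single_inl_eq_ker_funLeft_inr {R : Type*} [Semiring R] {α β : Type*}
    [Fintype α] [DecidableEq α] [DecidableEq β] :
    Submodule.span R (Set.range fun i : α => Pi.single (Sum.inl i : α ⊕ β) (1 : R)) =
      LinearMap.ker (LinearMap.funLeft R R (Sum.inr : β → α ⊕ β)) := by
  apply le_antisymm
  · rw [Submodule.span_le]
    rintro _ ⟨i, rfl⟩
    ext j
    simp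
  · intro x hx
    have hx_inr : ∀ j, x (Sum.inr j) = 0 := fun j => congr_fun hx j
    have hx_eq : x = ∑ i : α, x (Sum.inl i) • Pi.single (Sum.inl i : α ⊕ β) (1 : R) := by
      ext (i | j) <;> simp [Finset.sum_apply, Pi.single_apply, hx_inr]
    rw [hx_eq]
    exact Submodule.sum_mem _ fun i _ => Submodule.smul_mem _ _ (Submodule.subset_span ⟨i, rfl⟩)

theorem linearIndependent_smul_single {R : Type*} [Ring R] [NoZeroDivisors R] {ι : Type*}
    [DecidableEq ι] {a : ι → R} (ha : ∀ i, a i ≠ 0) :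
    LinearIndependent R fun i => a i • Pi.single i (1 : R) := by
  rw [linearIndependent_iff']
  intro s c hc i hi
  have := congr_fun hc i
  simp only [Finset.sum_apply, Pi.smul_apply, Pi.single_apply, smul_eq_mul, mul_ite, mul_one,
    mul_zero, Finset.sum_ite_eq, hi, if_true, Pi.zero_apply] at this
  exact (mul_eq_zero.mp this).resolve_right (ha i)

theorem Submodule.nonempty_linearEquiv_pi_of_linearIndependent {R : Type*} [CommRing R]
    [IsDomain R] [IsPrincipalIdealRing R] {M : Type*} [AddCommGroup M] [Module R M]
    [Module.Free R M] [Module.Finite R M] {ι : Type*} [Fintype ι] (P : Submodule R M)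
    {v : ι → P} (hv : LinearIndependent R v) (hM : finrank R M = Fintype.card ι) :
    Nonempty (P ≃ₗ[R] (ι → R)) := by
  apply FiniteDimensional.nonempty_linearEquiv_of_finrank_eq
  rw [finrank_pi]
  exact le_antisymm ((Submodule.finrank_le P).trans hM.le) hv.fintype_card_le_finrank

theorem ker_free_of_rank_n_of_precritical_general
    {R : Type*} [CommRing R] [IsDomain R] [IsPrincipalIdealRing R]
    {m n : ℕ} {N : Type*} [AddCommGroup N] [Module R N]
    (bd : ((Fin m ⊕ Fin n) → R) →ₗ[R] N)
    (hinj : ∀ x ∈ Submodule.span R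
      (Set.range fun i : Fin m => Pi.single (Sum.inl i : Fin m ⊕ Fin n) (1 : R)),
      bd x = 0 → x = 0)
    (hprec : ∀ j : Fin n, ∃ a : R, a ≠ 0 ∧
      a • bd (Pi.single (Sum.inr j) 1) ∈ Submodule.map bd
        (Submodule.span R
          (Set.range fun i : Fin m => Pi.single (Sum.inl i : Fin m ⊕ Fin n) (1 : R)))) :
    Nonempty (LinearMap.ker bd ≃ₗ[R] (Fin n → R)) := by
  rw [span_range_single_inl_eq_ker_funLeft_inr] at hinj hprec
  let φ := (LinearMap.funLeft R R Sum.inr).domRestrict (LinearMap.ker bd)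
  have hφ : Function.Injective φ :=
    LinearMap.injective_domRestrict_iff.mpr (LinearMap.disjoint_ker.mpr hinj).symm
  choose a ha hmem using hprec
  have hcycle : ∀ j, a j • Pi.single j 1 ∈ LinearMap.range φ := by
    intro j
    obtain ⟨c, hc, hbc⟩ := hmem j
    refine ⟨⟨a j • Pi.single (Sum.inr j) 1 - c, by simp [hbc]⟩, ?_⟩
    ext j'
    have hcj : c (Sum.inr j') = 0 := congr_fun (LinearMap.mem_ker.mp hc) j'
    simp [φ, hcj, Pi.single_apply]
  obtain ⟨e⟩ := (LinearMap.range φ).nonempty_linearEquiv_pi_of_linearIndependent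
    (v := fun j => ⟨_, hcycle j⟩)
    (LinearIndependent.of_comp (LinearMap.range φ).subtype (linearIndependent_smul_single ha))
    (by simp)
  exact ⟨(LinearEquiv.ofInjective φ hφ).trans e⟩

theorem ker_free_of_rank_n_of_precritical
    {R : Type*} [CommRing R] [IsDomain R] [IsPrincipalIdealRing R]
    {m n : ℕ} {N : Type*} [AddCommGroup N] [Module R N] [Module.Free R N]
    (bd : ((Fin m ⊕ Fin n) → R) →ₗ[R] N)
    (hinj : ∀ x ∈ Submodule.span R
      (Set.range fun i : Fin m => Pi.single (Sum.inl i : Fin m ⊕ Fin n) (1 : R)),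
      bd x = 0 → x = 0)
    (hprec : ∀ j : Fin n, ∃ a : R, a ≠ 0 ∧
      a • bd (Pi.single (Sum.inr j) 1) ∈ Submodule.map bd
        (Submodule.span R
          (Set.range fun i : Fin m => Pi.single (Sum.inl i : Fin m ⊕ Fin n) (1 : R)))) :
    Nonempty (LinearMap.ker bd ≃ₗ[R] (Fin n → R)) :=
  ker_free_of_rank_n_of_precritical_general bd hinj hprec
end

section
/- Let R be a PID and ∂_d: C_d → C_{d-1} an R-linear map between free R-modules with basis of C_d given by {e_1,...,e_m, g_1,...,g_n}, such that ∂_d restricted to Ĉ_d = span(e_1,...,e_m) is injective, and for each j there exist a_i ∈ R with ∂_d(g_j) = Σ_i a_i ∂_d(e_i) (each g_j is critical). Then there exist unique elements ρ_1,...,ρ_n ∈ ker ∂_d such that the coefficient of g_j in ρ_i (with respect to the given basis) is δ_{ij}, and {ρ_1,...,ρ_n} is a basis of ker ∂_d. -/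
/-!
On the kernel of `bd`, the coordinates along the `inr` basis vectors determine an element: the
difference of two kernel elements with the same `inr` coordinates lies in the span of the `inl`
basis vectors, on which `bd` is injective. Every tuple of `inr` coordinates is realised, since a
critical `g_j` gives the kernel element `g_j - ∑ᵢ aᵢ eᵢ` with `inr` coordinates `δ_j`. Hence
reading off the `inr` coordinates is an isomorphism `ker bd ≃ (κ → R)`, and the `ρ_j` are the
preimages of the standard basis.
-/

section

variable {R : Type*} [CommRing R] {ι κ : Type*} {N : Type*} [AddCommGroup N] [Module R N]

def kerInrCoords (bd : (ι ⊕ κ → R) →ₗ[R] N) : LinearMap.ker bd →ₗ[R] κ → R :=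
  LinearMap.funLeft R R Sum.inr ∘ₗ (LinearMap.ker bd).subtype

@[simp]
lemma kerInrCoords_apply (bd : (ι ⊕ κ → R) →ₗ[R] N) (x : LinearMap.ker bd) (j : κ) :
    kerInrCoords bd x j = (x : ι ⊕ κ → R) (Sum.inr j) :=
  rfl

variable [DecidableEq ι] [DecidableEq κ]

lemma mem_span_single_inl_of_inr_eq_zero [Fintype ι] {x : ι ⊕ κ → R}
    (hx : ∀ j, x (Sum.inr j) = 0) :
    x ∈ Submodule.span R (Set.range fun i : ι => Pi.single (Sum.inl i : ι ⊕ κ) (1 : R)) := by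
  have hx_eq : x = ∑ i : ι, x (Sum.inl i) • Pi.single (Sum.inl i : ι ⊕ κ) (1 : R) := by
    ext (i | j) <;> simp [Pi.single_apply, hx]
  rw [hx_eq]
  exact Submodule.sum_mem _ fun i _ => Submodule.smul_mem _ _ (Submodule.subset_span ⟨i, rfl⟩)

lemma kerInrCoords_injective [Fintype ι] {bd : (ι ⊕ κ → R) →ₗ[R] N}
    (hinj : ∀ x ∈ Submodule.span R
      (Set.range fun i : ι => Pi.single (Sum.inl i : ι ⊕ κ) (1 : R)), bd x = 0 → x = 0) :
    Function.Injective (kerInrCoords bd) := by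
  refine (injective_iff_map_eq_zero _).mpr fun x hx => Subtype.ext ?_
  exact hinj _ (mem_span_single_inl_of_inr_eq_zero fun j => congr_fun hx j) x.2

lemma single_inr_sub_sum_mem_ker [Fintype ι] {bd : (ι ⊕ κ → R) →ₗ[R] N} {j : κ} {a : ι → R}
    (ha : bd (Pi.single (Sum.inr j) 1) = ∑ i, a i • bd (Pi.single (Sum.inl i) 1)) :
    Pi.single (Sum.inr j) 1 - ∑ i, a i • Pi.single (Sum.inl i) 1 ∈ LinearMap.ker bd := by
  simp only [LinearMap.mem_ker, map_sub, map_sum, map_smul, ha, sub_self]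

lemma kerInrCoords_surjective [Fintype ι] [Finite κ] {bd : (ι ⊕ κ → R) →ₗ[R] N}
    (hcrit : ∀ j : κ, ∃ a : ι → R,
      bd (Pi.single (Sum.inr j) 1) = ∑ i, a i • bd (Pi.single (Sum.inl i) 1)) :
    Function.Surjective (kerInrCoords bd) := by
  have hsingle (j : κ) : Pi.single j 1 ∈ LinearMap.range (kerInrCoords bd) := by
    obtain ⟨a, ha⟩ := hcrit j
    refine ⟨⟨_, single_inr_sub_sum_mem_ker ha⟩, funext fun k => ?_⟩
    simp [Pi.single_apply]
  rw [← LinearMap.range_eq_top, eq_top_iff, ← (Pi.basisFun R κ).span_eq, Submodule.span_le]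
  rintro _ ⟨j, rfl⟩
  simpa using hsingle j

end

theorem basis_of_kernel_from_critical_elements_general
    {R : Type*} [CommRing R]
    {m n : ℕ} {N : Type*} [AddCommGroup N] [Module R N]
    (bd : ((Fin m ⊕ Fin n) → R) →ₗ[R] N)
    (hinj : ∀ x ∈ Submodule.span R
      (Set.range fun i : Fin m => Pi.single (Sum.inl i : Fin m ⊕ Fin n) (1 : R)),
      bd x = 0 → x = 0)
    (hcrit : ∀ j : Fin n, ∃ a : Fin m → R,
      bd (Pi.single (Sum.inr j) 1) = ∑ i : Fin m, a i • bd (Pi.single (Sum.inl i) 1)) :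
    ∃ ρ : Fin n → LinearMap.ker bd,
      (∀ i j : Fin n, (ρ i : (Fin m ⊕ Fin n) → R) (Sum.inr j) =
        if i = j then 1 else 0) ∧
      (∀ σ : Fin n → LinearMap.ker bd,
        (∀ i j : Fin n, (σ i : (Fin m ⊕ Fin n) → R) (Sum.inr j) =
          if i = j then 1 else 0) → σ = ρ) ∧
      LinearIndependent R ρ ∧
      Submodule.span R (Set.range ρ) = ⊤ := by
  let e := LinearEquiv.ofBijective (kerInrCoords bd)
    ⟨kerInrCoords_injective hinj, kerInrCoords_surjective hcrit⟩
  have he (x : LinearMap.ker bd) (j : Fin n) : e x j = (x : Fin m ⊕ Fin n → R) (Sum.inr j) := rfl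
  let b := (Pi.basisFun R (Fin n)).map e.symm
  have hcoords (σ : Fin n → LinearMap.ker bd) :
      (∀ i j, (σ i : (Fin m ⊕ Fin n) → R) (Sum.inr j) = if i = j then 1 else 0) ↔ σ = b := by
    simp only [funext_iff, b, Module.Basis.map_apply, Pi.basisFun_apply, LinearEquiv.eq_symm_apply]
    simp [he, Pi.single_apply, eq_comm]
  exact ⟨b, (hcoords b).mpr rfl, fun σ hσ => (hcoords σ).mp hσ, b.linearIndependent, b.span_eq⟩

theorem basis_of_kernel_from_critical_elements
    {R : Type*} [CommRing R] [IsDomain R] [IsPrincipalIdealRing R]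
    {m n : ℕ} {N : Type*} [AddCommGroup N] [Module R N]
    (bd : ((Fin m ⊕ Fin n) → R) →ₗ[R] N)
    (hinj : ∀ x ∈ Submodule.span R
      (Set.range fun i : Fin m => Pi.single (Sum.inl i : Fin m ⊕ Fin n) (1 : R)),
      bd x = 0 → x = 0)
    (hcrit : ∀ j : Fin n, ∃ a : Fin m → R,
      bd (Pi.single (Sum.inr j) 1) = ∑ i : Fin m, a i • bd (Pi.single (Sum.inl i) 1)) :
    ∃ ρ : Fin n → LinearMap.ker bd,
      (∀ i j : Fin n, (ρ i : (Fin m ⊕ Fin n) → R) (Sum.inr j) =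
        if i = j then 1 else 0) ∧
      (∀ σ : Fin n → LinearMap.ker bd,
        (∀ i j : Fin n, (σ i : (Fin m ⊕ Fin n) → R) (Sum.inr j) =
          if i = j then 1 else 0) → σ = ρ) ∧
      LinearIndependent R ρ ∧
      Submodule.span R (Set.range ρ) = ⊤ :=
  basis_of_kernel_from_critical_elements_general bd hinj hcrit
end

section
/- Every cone chain complex over a principal ideal domain R is acyclic, i.e. H_0(C) ≅ R and H_ν(C) = 0 for all ν ≥ 1. -/
/-!
Condition (1b) says that the boundaries together with the span of the coordinate vectors of
`S ν` fill the whole chain module, and condition (1a) says that no nonzero chain in that span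
is a cycle: evaluate its boundary at a support point private to one of its coordinates. Hence
every cycle is a boundary. In degree `0` conditions (3) and (2) say the same for `S 0 = {e₀}`
(a boundary cannot be supported on a single point), so the line `R • e₀` is a complement of
the boundaries and `H₀ ≅ R`.
-/

open LinearMap Submodule

namespace ConeComplex

variable (R : Type*) [CommRing R] {ι κ M : Type*} [AddCommGroup M] [Module R M] [DecidableEq ι]

def spanSingles (T : Set ι) : Submodule R (ι → R) :=
  span R {x | ∃ f ∈ T, x = Pi.single f 1}

variable {R}

theorem apply_eq_zero_of_mem_spanSingles {T : Set ι} {x : ι → R} (hx : x ∈ spanSingles R T)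
    {j : ι} (hj : j ∉ T) : x j = 0 := by
  have hle : spanSingles R T ≤ Submodule.pi Tᶜ fun _ => ⊥ := by
    refine span_le.2 ?_
    rintro _ ⟨f, hf, rfl⟩ i hi
    have hfi : f ≠ i := fun h => hi (h ▸ hf)
    simp [Pi.single_eq_of_ne' hfi]
  simpa using hle hx j hj

theorem spanSingles_singleton (e : ι) :
    spanSingles R {e} = range (toSpanSingleton R (ι → R) (Pi.single e 1)) := by
  simp [spanSingles, range_toSpanSingleton]

theorem eq_top_of_forall_single_mem [Finite ι] {P : Submodule R (ι → R)}
    (h : ∀ i, Pi.single i 1 ∈ P) : P = ⊤ := by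
  rw [eq_top_iff, ← (Pi.basisFun R ι).span_eq, span_le]
  rintro _ ⟨i, rfl⟩
  simpa using h i

theorem mem_sup_of_isUnit_smul_add_mem {P Q : Submodule R M} {x y r : M} {c : R}
    (hc : IsUnit c) (hy : y ∈ P) (hr : r ∈ Q) (h : y = c • x + r) : x ∈ P ⊔ Q := by
  obtain ⟨u, rfl⟩ := hc
  have hx : x = (↑u⁻¹ : R) • y - (↑u⁻¹ : R) • r := by
    rw [h, smul_add, smul_smul, Units.inv_mul, one_smul, add_sub_cancel_right]
  rw [hx]
  exact sub_mem (mem_sup_left (smul_mem _ _ hy)) (mem_sup_right (smul_mem _ _ hr))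

theorem range_sup_spanSingles_eq_top [Finite ι] (φ : M →ₗ[R] (ι → R)) {T : Set ι}
    (h1b : ∀ e ∉ T, ∃ (τ : M) (c : R) (r : ι → R),
      IsUnit c ∧ r ∈ spanSingles R T ∧ φ τ = c • Pi.single e 1 + r) :
    range φ ⊔ spanSingles R T = ⊤ := by
  refine eq_top_of_forall_single_mem fun e => ?_
  by_cases he : e ∈ T
  · exact mem_sup_right (subset_span ⟨e, he, rfl⟩)
  · obtain ⟨τ, c, r, hc, hr, hτ⟩ := h1b e he
    exact mem_sup_of_isUnit_smul_add_mem hc (mem_range_self φ τ) hr hτ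

theorem eq_zero_of_mem_spanSingles_of_map_eq_zero [Fintype ι] [NoZeroDivisors R]
    (φ : (ι → R) →ₗ[R] (κ → R)) {T : Set ι}
    (h1a : ∀ e ∈ T, ¬ ({i | φ (Pi.single e 1) i ≠ 0} ⊆
      {i | ∃ f ∈ T, f ≠ e ∧ φ (Pi.single f 1) i ≠ 0}))
    {s : ι → R} (hs : s ∈ spanSingles R T) (hφs : φ s = 0) : s = 0 := by
  funext e
  by_contra hse
  have heT : e ∈ T := by_contra fun h => hse (apply_eq_zero_of_mem_spanSingles hs h)
  obtain ⟨i, hi, hpriv⟩ := Set.not_subset.1 (h1a e heT)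
  simp only [Set.mem_ofPred_eq, not_exists, not_and, not_not] at hpriv
  have hexpand : φ s i = ∑ f, s f * φ (Pi.single f 1) i := by
    conv_lhs => rw [← Finset.univ_sum_single s]
    rw [map_sum, Finset.sum_apply]
    refine Finset.sum_congr rfl fun f _ => ?_
    rw [← smul_eq_mul, ← Pi.smul_apply, ← map_smul, ← Pi.single_smul', smul_eq_mul, mul_one]
  have hsingle : φ s i = s e * φ (Pi.single e 1) i := by
    refine hexpand.trans (Finset.sum_eq_single e (fun f _ hfe => ?_) (by simp))
    by_cases hf : f ∈ T
    · rw [hpriv f hf hfe, mul_zero]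
    · rw [apply_eq_zero_of_mem_spanSingles hs hf, zero_mul]
  exact mul_ne_zero hse hi (hsingle ▸ congrFun hφs i)

theorem ker_eq_range_of_cone [Fintype ι] [NoZeroDivisors R]
    (φ₁ : (ι → R) →ₗ[R] (κ → R)) (φ₂ : M →ₗ[R] (ι → R)) (hφ : φ₁ ∘ₗ φ₂ = 0) {T : Set ι}
    (h1a : ∀ e ∈ T, ¬ ({i | φ₁ (Pi.single e 1) i ≠ 0} ⊆
      {i | ∃ f ∈ T, f ≠ e ∧ φ₁ (Pi.single f 1) i ≠ 0}))
    (h1b : ∀ e ∉ T, ∃ (τ : M) (c : R) (r : ι → R),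
      IsUnit c ∧ r ∈ spanSingles R T ∧ φ₂ τ = c • Pi.single e 1 + r) :
    ker φ₁ = range φ₂ := by
  refine le_antisymm (fun z hz => ?_) (range_le_ker_iff.2 hφ)
  obtain ⟨b, ⟨τ, rfl⟩, s, hs, rfl⟩ :=
    mem_sup.1 ((range_sup_spanSingles_eq_top φ₂ h1b).ge (mem_top (x := z)))
  have hφs : φ₁ s = 0 := by
    simpa [← comp_apply, hφ] using (mem_ker.1 hz : φ₁ (φ₂ τ + s) = 0)
  rw [eq_zero_of_mem_spanSingles_of_map_eq_zero φ₁ h1a hs hφs, add_zero]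
  exact mem_range_self φ₂ τ

theorem disjoint_range_spanSingles_singleton (φ : M →ₗ[R] (ι → R)) (e₀ : ι)
    (h2 : ∀ σ, φ σ ≠ 0 → 2 ≤ {i | φ σ i ≠ 0}.ncard) :
    Disjoint (range φ) (spanSingles R {e₀}) := by
  rw [disjoint_def]
  rintro _ ⟨σ, rfl⟩ hσ
  by_contra hne
  have hsupp : {i | φ σ i ≠ 0} ⊆ {e₀} := fun i hi =>
    by_contra fun h => hi (apply_eq_zero_of_mem_spanSingles hσ h)
  have := (Set.ncard_le_ncard hsupp).trans (Set.ncard_singleton e₀).le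
  have := h2 σ hne
  omega

theorem nonempty_quotient_range_equiv [Fintype ι] (φ : M →ₗ[R] (ι → R)) (e₀ : ι)
    (h2 : ∀ σ, φ σ ≠ 0 → 2 ≤ {i | φ σ i ≠ 0}.ncard)
    (h3 : ∀ e ≠ e₀, ∃ (τ : M) (c c₀ : R),
      IsUnit c ∧ φ τ = c • Pi.single e 1 + c₀ • Pi.single e₀ 1) :
    Nonempty (((ι → R) ⧸ range φ) ≃ₗ[R] R) := by
  have hcodisjoint : range φ ⊔ spanSingles R {e₀} = ⊤ := by
    refine range_sup_spanSingles_eq_top φ fun e he => ?_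
    obtain ⟨τ, c, c₀, hc, hτ⟩ := h3 e he
    exact ⟨τ, c, _, hc, smul_mem _ c₀ (subset_span ⟨e₀, rfl, rfl⟩), hτ⟩
  have hcompl : IsCompl (range φ) (spanSingles R {e₀}) :=
    ⟨disjoint_range_spanSingles_singleton φ e₀ h2, codisjoint_iff.2 hcodisjoint⟩
  have hinj : Function.Injective (toSpanSingleton R (ι → R) (Pi.single e₀ 1)) :=
    fun r s h => by simpa using congrFun h e₀
  exact ⟨(quotientEquivOfIsCompl _ _ hcompl).trans
    ((LinearEquiv.ofEq _ _ (spanSingles_singleton e₀)).trans (LinearEquiv.ofInjective _ hinj).symm)⟩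

end ConeComplex

theorem cone_is_acyclic_general
    {R : Type*} [CommRing R] [IsDomain R]
    (d : ℕ) (k : ℕ → ℕ) (hk : ∀ ν, d < ν → k ν = 0)
    (bd : ∀ ν : ℕ, (Fin (k (ν + 1)) → R) →ₗ[R] (Fin (k ν) → R))
    (hcc : ∀ ν, (bd ν).comp (bd (ν + 1)) = 0)
    (S : ∀ ν, Set (Fin (k ν)))
    -- (1a): every `e ∈ S (ν+1)` has a boundary support point private to it
    (hS1a : ∀ ν, ν + 1 ≤ d → ∀ e ∈ S (ν + 1),
      ¬ ({i | bd ν (Pi.single e 1) i ≠ 0} ⊆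
          {i | ∃ f ∈ S (ν + 1), f ≠ e ∧ bd ν (Pi.single f 1) i ≠ 0}))
    -- (1b): every basis element outside `S (ν+1)` is, up to a unit and a
    -- correction in the span of `S (ν+1)`, a boundary
    (hS1b : ∀ ν, ν + 1 ≤ d → ∀ e, e ∉ S (ν + 1) →
      ∃ (τ : Fin (k (ν + 2)) → R) (c : R) (r : Fin (k (ν + 1)) → R),
        IsUnit c ∧
        r ∈ Submodule.span R {x : Fin (k (ν + 1)) → R | ∃ f ∈ S (ν + 1), x = Pi.single f 1} ∧
        bd (ν + 1) τ = c • (Pi.single e 1 : Fin (k (ν + 1)) → R) + r)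
    -- cone condition (2): boundaries of non-cycles in `C 1` have support of size ≥ 2
    (hS2 : ∀ σ : Fin (k 1) → R, bd 0 σ ≠ 0 → 2 ≤ Set.ncard {i | bd 0 σ i ≠ 0})
    -- cone condition (3)
    (hS0 : ∃ e₀ : Fin (k 0), S 0 = {e₀} ∧ ∀ e : Fin (k 0), e ≠ e₀ →
      ∃ (τ : Fin (k 1) → R) (c c₀ : R), IsUnit c ∧ c₀ ≠ 0 ∧
        bd 0 τ = c • (Pi.single e 1 : Fin (k 0) → R) + c₀ • (Pi.single e₀ 1 : Fin (k 0) → R)) :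
    -- acyclicity: `H 0 ≅ R` and `H ν = 0` for `ν ≥ 1`
    Nonempty (((Fin (k 0) → R) ⧸ LinearMap.range (bd 0)) ≃ₗ[R] R) ∧
    ∀ ν : ℕ, LinearMap.ker (bd ν) = LinearMap.range (bd (ν + 1)) := by
  obtain ⟨e₀, -, h0⟩ := hS0
  refine ⟨ConeComplex.nonempty_quotient_range_equiv (bd 0) e₀ hS2 fun e he => ?_, fun ν => ?_⟩
  · obtain ⟨τ, c, c₀, hc, -, hτ⟩ := h0 e he
    exact ⟨τ, c, c₀, hc, hτ⟩
  by_cases hν : ν + 1 ≤ d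
  · exact ConeComplex.ker_eq_range_of_cone (bd ν) (bd (ν + 1)) (hcc ν) (hS1a ν hν) (hS1b ν hν)
  · have : IsEmpty (Fin (k (ν + 1))) := by rw [hk (ν + 1) (by omega)]; infer_instance
    exact Subsingleton.elim _ _

/-- A cone chain complex over a principal ideal domain is acyclic. Here the
chain complex has chain modules `C ν = Fin (k ν) → R`, boundary maps
`bd ν : C (ν + 1) → C ν`, and is finite of order `d`. -/
theorem cone_is_acyclic
    {R : Type*} [CommRing R] [IsDomain R] [IsPrincipalIdealRing R]
    (d : ℕ) (k : ℕ → ℕ) (hk : ∀ ν, d < ν → k ν = 0) (hkd : 0 < k d)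
    (bd : ∀ ν : ℕ, (Fin (k (ν + 1)) → R) →ₗ[R] (Fin (k ν) → R))
    (hcc : ∀ ν, (bd ν).comp (bd (ν + 1)) = 0)
    (S : ∀ ν, Set (Fin (k ν)))
    -- cone condition (1): for every `1 ≤ ν + 1 ≤ d`, `S (ν+1)` is nonempty, ...
    (hS1 : ∀ ν, ν + 1 ≤ d → (S (ν + 1)).Nonempty)
    -- (1a): every `e ∈ S (ν+1)` has a boundary support point private to it
    (hS1a : ∀ ν, ν + 1 ≤ d → ∀ e ∈ S (ν + 1),
      ¬ ({i | bd ν (Pi.single e 1) i ≠ 0} ⊆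
          {i | ∃ f ∈ S (ν + 1), f ≠ e ∧ bd ν (Pi.single f 1) i ≠ 0}))
    -- (1b): every basis element outside `S (ν+1)` is, up to a unit and a
    -- correction in the span of `S (ν+1)`, a boundary
    (hS1b : ∀ ν, ν + 1 ≤ d → ∀ e, e ∉ S (ν + 1) →
      ∃ (τ : Fin (k (ν + 2)) → R) (c : R) (r : Fin (k (ν + 1)) → R),
        IsUnit c ∧
        r ∈ Submodule.span R {x : Fin (k (ν + 1)) → R | ∃ f ∈ S (ν + 1), x = Pi.single f 1} ∧
        bd (ν + 1) τ = c • (Pi.single e 1 : Fin (k (ν + 1)) → R) + r)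
    -- cone condition (2): boundaries of non-cycles in `C 1` have support of size ≥ 2
    (hS2 : ∀ σ : Fin (k 1) → R, bd 0 σ ≠ 0 → 2 ≤ Set.ncard {i | bd 0 σ i ≠ 0})
    -- cone condition (3)
    (hS0 : ∃ e₀ : Fin (k 0), S 0 = {e₀} ∧ ∀ e : Fin (k 0), e ≠ e₀ →
      ∃ (τ : Fin (k 1) → R) (c c₀ : R), IsUnit c ∧ c₀ ≠ 0 ∧
        bd 0 τ = c • (Pi.single e 1 : Fin (k 0) → R) + c₀ • (Pi.single e₀ 1 : Fin (k 0) → R)) :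
    -- acyclicity: `H 0 ≅ R` and `H ν = 0` for `ν ≥ 1`
    Nonempty (((Fin (k 0) → R) ⧸ LinearMap.range (bd 0)) ≃ₗ[R] R) ∧
    ∀ ν : ℕ, LinearMap.ker (bd ν) = LinearMap.range (bd (ν + 1)) :=
  cone_is_acyclic_general d k hk bd hcc S hS1a hS1b hS2 hS0
end
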